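/- Theorem 5, second part: under the covariance assumptions on both constraints and objective, if an optimal measurement exists (some Φ ∈ 𝓜ᵐᵐ with f(Φ) ≥ f(Π') for all Π' ∈ 𝓜ᵐᵐ), then there exists an optimal measurement Π ∈ 𝓜ᵐᵐ that is G-covariant: (U g) * Π m * (U g)† = Π (g • m) for all g ∈ G and m ∈ Fin M. -/

import Mathlib

open Matrix Complex
open scoped ComplexOrder

noncomputable section

/-- A POVM with `M` outcomes: each detection operator is positive semidefinite
and they sum to the identity. -/
def IsPOVM {n : Type*} [Fintype n] [DecidableEq n] {M : ℕ}
    (P : Fin M → Matrix n n ℂ) : Prop :=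
  (∀ m, (P m).PosSemidef) ∧ ∑ m, P m = 1

/-- Membership in the feasible set `𝓜ᵐᵐ`. -/
def Feasible {n : Type*} [Fintype n] [DecidableEq n] {M J : ℕ}
    (a : Fin J → Fin M → Matrix n n ℂ) (b : Fin J → ℝ)
    (P : Fin M → Matrix n n ℂ) : Prop :=
  IsPOVM P ∧ ∀ j, ∑ m, ((a j m * P m).trace).re ≤ b j

/-- The primal objective `f(Π)`. -/
def primalObj {n : Type*} [Fintype n] {M : ℕ}
    (c : Fin M → Matrix n n ℂ) (P : Fin M → Matrix n n ℂ) : ℝ :=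
  ∑ m, ((c m * P m).trace).re

/-- The operator `z m λ = c m - ∑ j, λ j • a j m`. -/
def zOp {M J : ℕ} {n : Type*}
    (c : Fin M → Matrix n n ℂ) (a : Fin J → Fin M → Matrix n n ℂ)
    (lam : Fin J → ℝ) (m : Fin M) : Matrix n n ℂ :=
  c m - ∑ j, (lam j : ℂ) • a j m

/-- The dual objective `s(X, λ)`. -/
def dualObj {n : Type*} [Fintype n] {J : ℕ}
    (b : Fin J → ℝ) (X : Matrix n n ℂ) (lam : Fin J → ℝ) : ℝ :=
  X.trace.re + ∑ j, lam j * b j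


/-- The action `g · A = (U g) * A * (U g)†` of a group on matrices induced by a
unitary representation `U`. -/
def conjAct {n : Type*} [Fintype n] [DecidableEq n] {G : Type*} [Group G]
    (U : G →* Matrix.unitaryGroup n ℂ) (g : G) (A : Matrix n n ℂ) : Matrix n n ℂ :=
  (U g : Matrix n n ℂ) * A * star (U g : Matrix n n ℂ)

/-- The mapping `κ_g` sending `Φ` to `m ↦ (U g)⁻¹ * Φ (g • m) * (U g)`
(note `(U g)⁻¹ = (U g)† = star (U g)`). -/
def kappa {n : Type*} [Fintype n] [DecidableEq n] {G : Type*} [Group G] {M : ℕ}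
    [MulAction G (Fin M)]
    (U : G →* Matrix.unitaryGroup n ℂ) (g : G)
    (Φ : Fin M → Matrix n n ℂ) : Fin M → Matrix n n ℂ :=
  fun m => star (U g : Matrix n n ℂ) * Φ (g • m) * (U g : Matrix n n ℂ)

/-! Twirling an optimal measurement `Φ`, i.e. averaging the maps `κ_g Φ` over `G`, yields a
covariant optimal measurement. Covariance of the constraints and of the objective makes every
`κ_g Φ` feasible with the same value as `Φ`; the feasible set is convex and the objective linear,
so the average is again feasible and optimal. Since `κ` is a right action of `G`, the average is
fixed by every `κ_h`, which is exactly covariance. -/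

section TraceForm

variable {n : Type*} [Fintype n] [DecidableEq n] {M J : ℕ}

def traceForm (d : Fin M → Matrix n n ℂ) : (Fin M → Matrix n n ℂ) →ₗ[ℝ] ℝ where
  toFun P := ∑ m, ((d m * P m).trace).re
  map_add' P Q := by simp [Matrix.mul_add, Finset.sum_add_distrib]
  map_smul' r P := by simp [Finset.mul_sum]

lemma primalObj_eq_traceForm (c : Fin M → Matrix n n ℂ) : primalObj c = traceForm c := rfl

lemma convex_isPOVM : Convex ℝ {P : Fin M → Matrix n n ℂ | IsPOVM P} := by
  intro P hP Q hQ s t hs ht hst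
  refine ⟨fun m => (hP.1 m).smul hs |>.add ((hQ.1 m).smul ht), ?_⟩
  simp only [Pi.add_apply, Pi.smul_apply, Finset.sum_add_distrib, ← Finset.smul_sum, hP.2,
    hQ.2, ← add_smul, hst, one_smul]

lemma convex_feasible (a : Fin J → Fin M → Matrix n n ℂ) (b : Fin J → ℝ) :
    Convex ℝ {P : Fin M → Matrix n n ℂ | Feasible a b P} := by
  have hsplit : {P : Fin M → Matrix n n ℂ | Feasible a b P}
      = {P | IsPOVM P} ∩ ⋂ j, {P | traceForm (a j) P ≤ b j} := by
    ext P
    simp [Feasible, traceForm]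
  rw [hsplit]
  exact convex_isPOVM.inter
    (convex_iInter fun j => convex_halfSpace_le (traceForm (a j)).isLinear (b j))

end TraceForm

section Kappa

variable {n : Type*} [Fintype n] [DecidableEq n] {G : Type*} [Group G] {M J : ℕ}
  [MulAction G (Fin M)] (U : G →* Matrix.unitaryGroup n ℂ)

lemma kappa_isPOVM (g : G) {Φ : Fin M → Matrix n n ℂ} (hΦ : IsPOVM Φ) :
    IsPOVM (kappa U g Φ) := by
  refine ⟨fun m => ?_, ?_⟩
  · simpa [kappa, Matrix.star_eq_conjTranspose] using
      (hΦ.1 (g • m)).conjTranspose_mul_mul_same (U g : Matrix n n ℂ)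
  · have hshift : ∑ m, Φ (g • m) = 1 := Equiv.sum_comp (MulAction.toPerm g) Φ ▸ hΦ.2
    simp only [kappa, ← Finset.mul_sum, ← Finset.sum_mul, hshift, mul_one,
      Matrix.UnitaryGroup.star_mul_self]

lemma traceForm_kappa {g : G} {d d' : Fin M → Matrix n n ℂ}
    (hd : ∀ m, conjAct U g (d m) = d' (g • m)) (Φ : Fin M → Matrix n n ℂ) :
    traceForm d (kappa U g Φ) = traceForm d' Φ := by
  have hcycle : ∀ m, (d m * kappa U g Φ m).trace = (d' (g • m) * Φ (g • m)).trace := by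
    intro m
    rw [← hd, kappa, conjAct, ← mul_assoc, Matrix.trace_mul_cycle]
    simp only [mul_assoc]
  simp only [traceForm, LinearMap.coe_mk, AddHom.coe_mk, hcycle]
  exact Equiv.sum_comp (MulAction.toPerm g) fun m => (d' m * Φ m).trace.re

lemma kappa_feasible {a : Fin J → Fin M → Matrix n n ℂ} {b : Fin J → ℝ} [MulAction G (Fin J)]
    (hcova : ∀ (g : G) j m, conjAct U g (a j m) = a (g • j) (g • m))
    (hcovb : ∀ (g : G) j, b j = b (g • j))
    (g : G) {Φ : Fin M → Matrix n n ℂ} (hΦ : Feasible a b Φ) :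
    Feasible a b (kappa U g Φ) := by
  refine ⟨kappa_isPOVM U g hΦ.1, fun j => ?_⟩
  have hshift := traceForm_kappa U (hcova g j) Φ
  simp only [traceForm, LinearMap.coe_mk, AddHom.coe_mk] at hshift
  rw [hshift, hcovb g j]
  exact hΦ.2 (g • j)

lemma kappa_kappa (g h : G) (Φ : Fin M → Matrix n n ℂ) :
    kappa U g (kappa U h Φ) = kappa U (h * g) Φ := by
  funext m
  simp only [kappa, map_mul, Matrix.UnitaryGroup.mul_val, star_mul, mul_smul, mul_assoc]

lemma kappa_sum (g : G) {ι : Type*} (s : Finset ι) (Φ : ι → Fin M → Matrix n n ℂ) :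
    kappa U g (∑ i ∈ s, Φ i) = ∑ i ∈ s, kappa U g (Φ i) := by
  funext m
  simp only [kappa, Finset.sum_apply, Finset.mul_sum, Finset.sum_mul]

lemma kappa_smul (g : G) (r : ℝ) (Φ : Fin M → Matrix n n ℂ) :
    kappa U g (r • Φ) = r • kappa U g Φ := by
  funext m
  simp only [kappa, Pi.smul_apply, Matrix.mul_smul, Matrix.smul_mul]

lemma conjAct_eq_of_kappa_eq {g : G} {P : Fin M → Matrix n n ℂ} (hP : kappa U g P = P)
    (m : Fin M) : conjAct U g (P m) = P (g • m) := by
  rw [← congrFun hP m, conjAct, kappa]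
  simp only [← mul_assoc, Unitary.mul_star_self_of_mem (U g).2, one_mul]
  simp only [mul_assoc, Unitary.mul_star_self_of_mem (U g).2, mul_one]

end Kappa

section Twirl

variable {n : Type*} [Fintype n] [DecidableEq n] {G : Type*} [Group G] [Fintype G] {M J : ℕ}
  [MulAction G (Fin M)] (U : G →* Matrix.unitaryGroup n ℂ)

def twirl (Φ : Fin M → Matrix n n ℂ) : Fin M → Matrix n n ℂ :=
  ∑ g : G, (Fintype.card G : ℝ)⁻¹ • kappa U g Φ

lemma kappa_twirl (h : G) (Φ : Fin M → Matrix n n ℂ) : kappa U h (twirl U Φ) = twirl U Φ := by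
  simp only [twirl, kappa_sum, kappa_smul, kappa_kappa]
  exact Equiv.sum_comp (Equiv.mulRight h) fun g => (Fintype.card G : ℝ)⁻¹ • kappa U g Φ

lemma twirl_feasible {a : Fin J → Fin M → Matrix n n ℂ} {b : Fin J → ℝ} [MulAction G (Fin J)]
    (hcova : ∀ (g : G) j m, conjAct U g (a j m) = a (g • j) (g • m))
    (hcovb : ∀ (g : G) j, b j = b (g • j))
    {Φ : Fin M → Matrix n n ℂ} (hΦ : Feasible a b Φ) : Feasible a b (twirl U Φ) :=
  (convex_feasible a b).sum_mem (fun _ _ => by positivity) (by simp [Finset.card_univ])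
    (fun g _ => kappa_feasible U hcova hcovb g hΦ)

lemma primalObj_twirl {c : Fin M → Matrix n n ℂ}
    (hcovc : ∀ (g : G) m, conjAct U g (c m) = c (g • m)) (Φ : Fin M → Matrix n n ℂ) :
    primalObj c (twirl U Φ) = primalObj c Φ := by
  simp only [primalObj_eq_traceForm, twirl, map_sum, map_smul, traceForm_kappa U (hcovc _),
    Finset.sum_const, Finset.card_univ, nsmul_eq_mul, smul_eq_mul, ← mul_assoc]
  field_simp

end Twirl

theorem exists_covariant_optimal_general
    {n : Type*} [Fintype n] [DecidableEq n]
    {G : Type*} [Group G] [Fintype G]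
    {M J : ℕ} [MulAction G (Fin M)] [MulAction G (Fin J)]
    (U : G →* Matrix.unitaryGroup n ℂ)
    (a : Fin J → Fin M → Matrix n n ℂ) (b : Fin J → ℝ)
    (hcova : ∀ (g : G) j m, conjAct U g (a j m) = a (g • j) (g • m))
    (hcovb : ∀ (g : G) j, b j = b (g • j))
    (c : Fin M → Matrix n n ℂ)
    (hcovc : ∀ (g : G) m, conjAct U g (c m) = c (g • m))
    (hopt : ∃ Φ, Feasible a b Φ ∧ ∀ P', Feasible a b P' → primalObj c P' ≤ primalObj c Φ) :
    ∃ P : Fin M → Matrix n n ℂ, Feasible a b P ∧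
      (∀ P', Feasible a b P' → primalObj c P' ≤ primalObj c P) ∧
      ∀ (g : G) (m : Fin M), conjAct U g (P m) = P (g • m) := by
  obtain ⟨Φ, hΦ, hΦopt⟩ := hopt
  refine ⟨twirl U Φ, twirl_feasible U hcova hcovb hΦ, ?_,
    fun g => conjAct_eq_of_kappa_eq U (kappa_twirl U g Φ)⟩
  rw [primalObj_twirl U hcovc]
  exact hΦopt

/-- Theorem 5, second part: if an optimal measurement exists, then a `G`-covariant
optimal measurement exists. -/
theorem exists_covariant_optimal
    {n : Type*} [Fintype n] [DecidableEq n] [Nonempty n]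
    {G : Type*} [Group G] [Fintype G]
    {M J : ℕ} [MulAction G (Fin M)] [MulAction G (Fin J)]
    (U : G →* Matrix.unitaryGroup n ℂ)
    (a : Fin J → Fin M → Matrix n n ℂ) (b : Fin J → ℝ)
    (ha : ∀ j m, (a j m).IsHermitian)
    (hne : ∃ P, Feasible a b P)
    (hcova : ∀ (g : G) j m, conjAct U g (a j m) = a (g • j) (g • m))
    (hcovb : ∀ (g : G) j, b j = b (g • j))
    (c : Fin M → Matrix n n ℂ) (hc : ∀ m, (c m).IsHermitian)
    (hcovc : ∀ (g : G) m, conjAct U g (c m) = c (g • m))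
    (hopt : ∃ Φ, Feasible a b Φ ∧ ∀ P', Feasible a b P' → primalObj c P' ≤ primalObj c Φ) :
    ∃ P : Fin M → Matrix n n ℂ, Feasible a b P ∧
      (∀ P', Feasible a b P' → primalObj c P' ≤ primalObj c P) ∧
      ∀ (g : G) (m : Fin M), conjAct U g (P m) = P (g • m) :=
  exists_covariant_optimal_general U a b hcova hcovb c hcovc hopt
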